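/- arXiv:2212.04187 — 2 statements merged into one kernel-verified Lean document; each statement's English description precedes it below -/
import Mathlib

section
/- Assume the non-parallel condition (NP): A e_i ≠ η A e_j for all indices i ≠ j and all η ∈ ℝ. Let J ⊆ {1,…,n} be a set of indices such that e_j lies in the orthogonal complement of ker(A) for every j ∈ J, and let j̃ ∉ J. Let x* = Σ_{j∈J} x*_j e_j + x*_{j̃} e_{j̃}, where all coefficients x*_j (j ∈ J) and x*_{j̃} are nonzero. Then x* is the unique minimizer of the weighted ℓ1 norm ‖W x‖₁ = Σ_{i=1}^n w_i |x_i| over all x ∈ ℝⁿ satisfying A x = A x*. -/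
open scoped RealInnerProductSpace Classical

/-- The `i`-th standard basis vector of `ℝⁿ`. -/
noncomputable def stdBasis (n : ℕ) (i : Fin n) : EuclideanSpace ℝ (Fin n) :=
  EuclideanSpace.single i 1

/-- `P`: the orthogonal projection of `ℝⁿ` onto the orthogonal complement of `ker A`
(this equals `A†A` for the Moore–Penrose pseudoinverse `A†`). -/
noncomputable def proj {m n : ℕ} (A : EuclideanSpace ℝ (Fin n) →ₗ[ℝ] EuclideanSpace ℝ (Fin m))
    (x : EuclideanSpace ℝ (Fin n)) : EuclideanSpace ℝ (Fin n) :=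
  (Submodule.orthogonalProjection (LinearMap.ker A)ᗮ x : EuclideanSpace ℝ (Fin n))

/-- The weights `w i = ‖P e_i‖₂`. -/
noncomputable def wgt {m n : ℕ} (A : EuclideanSpace ℝ (Fin n) →ₗ[ℝ] EuclideanSpace ℝ (Fin m))
    (i : Fin n) : ℝ :=
  ‖proj A (stdBasis n i)‖

/-- The weighted ℓ¹ norm `‖W x‖₁ = ∑ i, w i * |x i|`. -/
noncomputable def wl1 {m n : ℕ} (A : EuclideanSpace ℝ (Fin n) →ₗ[ℝ] EuclideanSpace ℝ (Fin m))
    (x : EuclideanSpace ℝ (Fin n)) : ℝ :=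
  ∑ i, wgt A i * |x i|

/-! `x*` is supported on `S = J ∪ {j̃}`, and the weighted null space property
`∑_{i ∈ S} wᵢ |vᵢ| < ∑_{i ∉ S} wᵢ |vᵢ|` for every nonzero `v ∈ ker A` makes any vector supported
on `S` the unique minimiser of `‖W ·‖₁` on its fibre of `A`.
To prove the property: `eⱼ ⊥ ker A` kills the `J`-coordinates of `v`, so `P v = 0` reads
`-v_{j̃} P e_{j̃} = ∑_{i ∉ S} vᵢ P eᵢ`, and `‖vᵢ P eᵢ‖ = wᵢ |vᵢ|`. The triangle inequality gives `≤`;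
equality would put some nonzero `vᵢ P eᵢ` on the ray of `P e_{j̃}`, and applying `A` (which
satisfies `A P = A`) would make `A eᵢ` parallel to `A e_{j̃}`, contradicting (NP). -/

section WeightedL1

variable {ι : Type*} [Fintype ι] [DecidableEq ι]

theorem sum_mul_abs_lt_sum_mul_abs_add (w : ι → ℝ) (hw : ∀ i, 0 ≤ w i) (s : Finset ι)
    {x v : ι → ℝ} (hx : ∀ i ∉ s, x i = 0)
    (hv : ∑ i ∈ s, w i * |v i| < ∑ i ∈ sᶜ, w i * |v i|) :
    ∑ i, w i * |x i| < ∑ i, w i * |x i + v i| := by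
  have hx_off : ∑ i ∈ sᶜ, w i * |x i| = 0 :=
    Finset.sum_eq_zero fun i hi => by simp [hx i (Finset.mem_compl.mp hi)]
  have hxv_off : ∑ i ∈ sᶜ, w i * |x i + v i| = ∑ i ∈ sᶜ, w i * |v i| :=
    Finset.sum_congr rfl fun i hi => by simp [hx i (Finset.mem_compl.mp hi)]
  have hon : ∑ i ∈ s, w i * |x i| ≤ ∑ i ∈ s, w i * |x i + v i| + ∑ i ∈ s, w i * |v i| := by
    rw [← Finset.sum_add_distrib]
    refine Finset.sum_le_sum fun i _ => ?_
    rw [← mul_add]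
    exact mul_le_mul_of_nonneg_left (by simpa using abs_add_le (x i + v i) (-v i)) (hw i)
  rw [← Finset.sum_add_sum_compl s, ← Finset.sum_add_sum_compl s, hx_off, hxv_off]
  linarith

end WeightedL1

theorem norm_sum_lt_sum_norm_of_not_sameRay {E ι : Type*} [NormedAddCommGroup E]
    [NormedSpace ℝ E] [StrictConvexSpace ℝ E] {s : Finset ι} {f : ι → E} {i : ι} (hi : i ∈ s)
    (h : ¬SameRay ℝ (f i) (∑ j ∈ s, f j)) : ‖∑ j ∈ s, f j‖ < ∑ j ∈ s, ‖f j‖ := by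
  classical
  rw [← Finset.add_sum_erase s f hi] at h ⊢
  rw [← Finset.add_sum_erase s (‖f ·‖) hi]
  calc ‖f i + ∑ j ∈ s.erase i, f j‖ < ‖f i‖ + ‖∑ j ∈ s.erase i, f j‖ :=
        norm_add_lt_of_not_sameRay fun hray => h ((SameRay.refl _).add_right hray)
    _ ≤ ‖f i‖ + ∑ j ∈ s.erase i, ‖f j‖ := by gcongr; exact norm_sum_le _ _

section Projection

variable {m n : ℕ} (A : EuclideanSpace ℝ (Fin n) →ₗ[ℝ] EuclideanSpace ℝ (Fin m))

theorem proj_apply (x : EuclideanSpace ℝ (Fin n)) :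
    proj A x = (LinearMap.ker A)ᗮ.starProjection x := rfl

theorem proj_eq_zero_iff {x : EuclideanSpace ℝ (Fin n)} : proj A x = 0 ↔ x ∈ LinearMap.ker A := by
  rw [proj_apply, Submodule.starProjection_apply_eq_zero_iff,
    Submodule.orthogonal_orthogonal]

theorem apply_proj (x : EuclideanSpace ℝ (Fin n)) : A (proj A x) = A x := by
  have h : x - proj A x ∈ LinearMap.ker A := by
    simpa only [proj_apply, Submodule.orthogonal_orthogonal] using
      (LinearMap.ker A)ᗮ.sub_starProjection_mem_orthogonal x
  rwa [LinearMap.mem_ker, map_sub, sub_eq_zero, eq_comm] at h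

theorem proj_eq_sum (x : EuclideanSpace ℝ (Fin n)) :
    proj A x = ∑ i, x i • proj A (stdBasis n i) := by
  conv_lhs => rw [← (EuclideanSpace.basisFun (Fin n) ℝ).sum_repr x]
  simp [proj_apply, stdBasis]

theorem proj_stdBasis_ne_zero (hA : ∀ i, stdBasis n i ∉ LinearMap.ker A) (i : Fin n) :
    proj A (stdBasis n i) ≠ 0 :=
  (proj_eq_zero_iff A).not.mpr (hA i)

theorem wgt_pos (hA : ∀ i, stdBasis n i ∉ LinearMap.ker A) (i : Fin n) : 0 < wgt A i :=
  norm_pos_iff.mpr (proj_stdBasis_ne_zero A hA i)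

theorem norm_smul_proj_stdBasis (a : ℝ) (i : Fin n) :
    ‖a • proj A (stdBasis n i)‖ = wgt A i * |a| := by
  rw [norm_smul, Real.norm_eq_abs, wgt, mul_comm]

theorem apply_eq_zero_of_mem_ker {v : EuclideanSpace ℝ (Fin n)} (hv : v ∈ LinearMap.ker A)
    {j : Fin n} (hj : stdBasis n j ∈ (LinearMap.ker A)ᗮ) : v j = 0 := by
  simpa [stdBasis, EuclideanSpace.inner_single_right] using
    (Submodule.mem_orthogonal _ _).mp hj v hv

theorem not_sameRay_smul_proj_stdBasis (hA : ∀ i, stdBasis n i ∉ LinearMap.ker A)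
    (hNP : ∀ i j : Fin n, i ≠ j → ∀ η : ℝ, A (stdBasis n i) ≠ η • A (stdBasis n j))
    {i j : Fin n} (hij : i ≠ j) {a b : ℝ} (ha : a ≠ 0) (hb : b ≠ 0) :
    ¬SameRay ℝ (a • proj A (stdBasis n i)) (b • proj A (stdBasis n j)) := by
  intro hray
  obtain ⟨r, -, hr⟩ := hray.exists_nonneg_left (smul_ne_zero ha (proj_stdBasis_ne_zero A hA i))
  apply hNP j i hij.symm (b⁻¹ * (r * a))
  rw [← apply_proj, ← apply_proj A (stdBasis n i), ← map_smul, mul_smul, mul_smul, hr,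
    inv_smul_smul₀ hb]

theorem sum_wgt_mul_abs_lt_of_mem_ker (hA : ∀ i, stdBasis n i ∉ LinearMap.ker A)
    (hNP : ∀ i j : Fin n, i ≠ j → ∀ η : ℝ, A (stdBasis n i) ≠ η • A (stdBasis n j))
    {J : Finset (Fin n)} {jt : Fin n} (hjt : jt ∉ J)
    (hJperp : ∀ j ∈ J, stdBasis n j ∈ (LinearMap.ker A)ᗮ)
    {v : EuclideanSpace ℝ (Fin n)} (hv : v ∈ LinearMap.ker A) (hv0 : v ≠ 0) :
    ∑ i ∈ insert jt J, wgt A i * |v i| < ∑ i ∈ (insert jt J)ᶜ, wgt A i * |v i| := by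
  have hvJ : ∀ j ∈ J, v j = 0 := fun j hj => apply_eq_zero_of_mem_ker A hv (hJperp j hj)
  set f : Fin n → EuclideanSpace ℝ (Fin n) := fun i => v i • proj A (stdBasis n i) with hf
  have hrel : ∑ i ∈ (insert jt J)ᶜ, f i = -f jt := by
    have h0 : ∑ i, f i = 0 := by rw [← proj_eq_sum, proj_eq_zero_iff]; exact hv
    rw [← Finset.sum_add_sum_compl (insert jt J), Finset.sum_insert hjt,
      Finset.sum_eq_zero fun j hj => by simp [hf, hvJ j hj], add_zero] at h0
    exact eq_neg_of_add_eq_zero_right h0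
  rw [Finset.sum_insert hjt, Finset.sum_eq_zero fun j hj => by simp [hvJ j hj], add_zero]
  simp_rw [← norm_smul_proj_stdBasis]
  rcases eq_or_ne (v jt) 0 with hjt0 | hjt0
  · obtain ⟨i, hi, hvi⟩ : ∃ i ∈ (insert jt J)ᶜ, v i ≠ 0 := by
      by_contra! hT
      refine hv0 (PiLp.ext fun i => ?_)
      by_cases hi : i ∈ insert jt J
      · rcases Finset.mem_insert.mp hi with rfl | hiJ
        exacts [hjt0, hvJ i hiJ]
      · exact hT i (Finset.mem_compl.mpr hi)
    rw [hjt0, zero_smul, norm_zero]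
    exact Finset.sum_pos' (fun _ _ => norm_nonneg _)
      ⟨i, hi, norm_pos_iff.mpr (smul_ne_zero hvi (proj_stdBasis_ne_zero A hA i))⟩
  · obtain ⟨i, hi, hfi⟩ := Finset.exists_ne_zero_of_sum_ne_zero
      (hrel ▸ neg_ne_zero.mpr (smul_ne_zero hjt0 (proj_stdBasis_ne_zero A hA jt)))
    have hij : i ≠ jt := by rintro rfl; simp at hi
    have hray : ¬SameRay ℝ (f i) (∑ j ∈ (insert jt J)ᶜ, f j) := by
      rw [hrel, ← neg_smul]
      exact not_sameRay_smul_proj_stdBasis A hA hNP hij (left_ne_zero_of_smul hfi)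
        (neg_ne_zero.mpr hjt0)
    calc ‖v jt • proj A (stdBasis n jt)‖ = ‖∑ j ∈ (insert jt J)ᶜ, f j‖ := by rw [hrel, norm_neg]
      _ < ∑ j ∈ (insert jt J)ᶜ, ‖f j‖ := norm_sum_lt_sum_norm_of_not_sameRay hi hray

end Projection

theorem stmt3_general {m n : ℕ}
    (A : EuclideanSpace ℝ (Fin n) →ₗ[ℝ] EuclideanSpace ℝ (Fin m))
    (hA : ∀ i, stdBasis n i ∉ LinearMap.ker A)
    (hNP : ∀ i j : Fin n, i ≠ j → ∀ η : ℝ, A (stdBasis n i) ≠ η • A (stdBasis n j))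
    (J : Finset (Fin n)) (jt : Fin n) (hjt : jt ∉ J)
    (hJperp : ∀ j ∈ J, stdBasis n j ∈ (LinearMap.ker A)ᗮ)
    (coef : Fin n → ℝ)
    (xstar : EuclideanSpace ℝ (Fin n))
    (hx : xstar = (∑ j ∈ J, coef j • stdBasis n j) + coef jt • stdBasis n jt) :
    (∀ x : EuclideanSpace ℝ (Fin n), A x = A xstar → wl1 A xstar ≤ wl1 A x) ∧
      ∀ y : EuclideanSpace ℝ (Fin n), A y = A xstar →
        (∀ x : EuclideanSpace ℝ (Fin n), A x = A xstar → wl1 A y ≤ wl1 A x) → y = xstar := by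
  have hsupp : ∀ i ∉ insert jt J, xstar i = 0 := by
    intro i hi
    rw [Finset.mem_insert, not_or] at hi
    subst hx
    simp [stdBasis, Pi.single_apply, hi.1, hi.2]
  have hlt : ∀ x, A x = A xstar → x ≠ xstar → wl1 A xstar < wl1 A x := by
    intro x hxA hne
    have hv : x - xstar ∈ LinearMap.ker A := by rw [LinearMap.mem_ker, map_sub, hxA, sub_self]
    simpa [wl1] using sum_mul_abs_lt_sum_mul_abs_add (wgt A) (fun i => (wgt_pos A hA i).le)
      (insert jt J) hsupp
      (sum_wgt_mul_abs_lt_of_mem_ker A hA hNP hjt hJperp hv (sub_ne_zero.mpr hne))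
  refine ⟨fun x hxA => ?_, fun y hyA hy => ?_⟩
  · rcases eq_or_ne x xstar with rfl | hne
    exacts [le_rfl, (hlt x hxA hne).le]
  · by_contra hne
    exact (hlt y hyA hne).not_ge (hy xstar rfl)

theorem stmt3 {m n : ℕ}
    (A : EuclideanSpace ℝ (Fin n) →ₗ[ℝ] EuclideanSpace ℝ (Fin m))
    (hA : ∀ i, stdBasis n i ∉ LinearMap.ker A)
    (hNP : ∀ i j : Fin n, i ≠ j → ∀ η : ℝ, A (stdBasis n i) ≠ η • A (stdBasis n j))
    (J : Finset (Fin n)) (jt : Fin n) (hjt : jt ∉ J)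
    (hJperp : ∀ j ∈ J, stdBasis n j ∈ (LinearMap.ker A)ᗮ)
    (coef : Fin n → ℝ) (hcoef : ∀ j ∈ J, coef j ≠ 0) (hcoefjt : coef jt ≠ 0)
    (xstar : EuclideanSpace ℝ (Fin n))
    (hx : xstar = (∑ j ∈ J, coef j • stdBasis n j) + coef jt • stdBasis n jt) :
    (∀ x : EuclideanSpace ℝ (Fin n), A x = A xstar → wl1 A xstar ≤ wl1 A x) ∧
      ∀ y : EuclideanSpace ℝ (Fin n), A y = A xstar →
        (∀ x : EuclideanSpace ℝ (Fin n), A x = A xstar → wl1 A y ≤ wl1 A x) → y = xstar :=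
  stmt3_general A hA hNP J jt hjt hJperp coef xstar hx
end

section
/- Let x* ∈ ℝⁿ with support J = supp(x*). Suppose there exist real numbers a_j, j ∈ J, such that the vector v = Σ_{j∈J} a_j W⁻¹ P e_j satisfies (C.1): v_i = sgn(x*_i) for all i ∈ J, and (C.2): v_i ∈ (−1, 1) for all i ∉ J. Let α > 0 be such that sgn(x*_j − α a_j) = sgn(x*_j) for all j ∈ J. Then y*_α = Σ_{j∈J} (x*_j − α a_j) e_j is a minimizer over x ∈ ℝⁿ of the functional T_α(x) = ½ ‖P x − P x*‖₂² + α Σ_{i=1}^n w_i |x_i|. -/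
/-!
Put `b = P (y* - x*)`. Since `b` lies in the range of the orthogonal projection `P`,
`½‖P x - P x*‖² = ½‖P x - P y*‖² + ⟪b, x - y*⟫ + ½‖b‖²`, so `y*` minimises `T_α` as soon as
`-b / α` is a subgradient of `x ↦ ∑ wᵢ |xᵢ|` at `y*`. The certificate gives `bᵢ = -α wᵢ vᵢ`, and
`v` is such a subgradient because `|vᵢ| ≤ 1` everywhere and `vᵢ y*ᵢ = |y*ᵢ|`: off `J` we have
`y*ᵢ = 0`, and on `J` the sign condition gives `sgn y*ᵢ = sgn x*ᵢ = vᵢ`.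
-/

open scoped RealInnerProductSpace Classical

theorem Submodule.half_norm_sq_starProjection_sub_add_le {E : Type*} [NormedAddCommGroup E]
    [InnerProductSpace ℝ E] (K : Submodule ℝ E) [K.HasOrthogonalProjection] (g : E → ℝ)
    (x₀ y : E) (hg : ∀ x, -⟪K.starProjection (y - x₀), x - y⟫ ≤ g x - g y) (x : E) :
    1 / 2 * ‖K.starProjection y - K.starProjection x₀‖ ^ 2 + g y ≤
      1 / 2 * ‖K.starProjection x - K.starProjection x₀‖ ^ 2 + g x := by
  set P := K.starProjection
  have hdecomp : P x - P x₀ = P (x - y) + P (y - x₀) := by simp only [map_sub]; abel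
  have hinner : ⟪P (x - y), P (y - x₀)⟫ = ⟪x - y, P (y - x₀)⟫ := by
    rw [K.inner_starProjection_left_eq_right,
      K.starProjection_eq_self_iff.mpr (K.starProjection_apply_mem _)]
  rw [hdecomp, norm_add_sq_real, hinner, ← map_sub, real_inner_comm]
  nlinarith [hg x, sq_nonneg ‖P (x - y)‖]

theorem Finset.sum_mul_mul_sub_le_of_subgradient {ι : Type*} (s : Finset ι) {w v y : ι → ℝ}
    (hw : ∀ i ∈ s, 0 ≤ w i) (hv : ∀ i ∈ s, |v i| ≤ 1) (hvy : ∀ i ∈ s, v i * y i = |y i|)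
    (z : ι → ℝ) :
    ∑ i ∈ s, w i * v i * (z i - y i) ≤ ∑ i ∈ s, w i * |z i| - ∑ i ∈ s, w i * |y i| := by
  rw [← Finset.sum_sub_distrib]
  refine Finset.sum_le_sum fun i hi => ?_
  have hvz : v i * z i ≤ |z i| := calc
    v i * z i ≤ |v i| * |z i| := by rw [← abs_mul]; exact le_abs_self _
    _ ≤ |z i| := mul_le_of_le_one_left (abs_nonneg _) (hv i hi)
  nlinarith [hw i hi, hvy i hi]

theorem Real.sign_mul_self_eq_abs (r : ℝ) : Real.sign r * r = |r| := by
  rcases lt_trichotomy r 0 with h | rfl | h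
  · rw [Real.sign_of_neg h, abs_of_neg h]; ring
  · simp
  · rw [Real.sign_of_pos h, abs_of_pos h]; ring

theorem Real.abs_sign_le_one (r : ℝ) : |Real.sign r| ≤ 1 := by
  rcases Real.sign_apply_eq r with h | h | h <;> simp [h]

theorem sum_smul_stdBasis_apply {n : ℕ} (s : Finset (Fin n)) (c : Fin n → ℝ) (i : Fin n) :
    (∑ j ∈ s, c j • stdBasis n j) i = if i ∈ s then c i else 0 := by
  simp [stdBasis, WithLp.ofLp_sum, Finset.sum_apply, Pi.single_apply]

theorem sum_support_smul_stdBasis {n : ℕ} (x : EuclideanSpace ℝ (Fin n)) :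
    ∑ j ∈ Finset.univ.filter (fun j => x j ≠ 0), x j • stdBasis n j = x := by
  ext i
  rw [sum_smul_stdBasis_apply]
  by_cases hi : x i = 0 <;> simp [hi]

theorem proj_eq_starProjection {m n : ℕ}
    (A : EuclideanSpace ℝ (Fin n) →ₗ[ℝ] EuclideanSpace ℝ (Fin m)) :
    proj A = (LinearMap.ker A)ᗮ.starProjection := rfl

theorem proj_sum_smul_stdBasis_apply {m n : ℕ}
    (A : EuclideanSpace ℝ (Fin n) →ₗ[ℝ] EuclideanSpace ℝ (Fin m)) (s : Finset (Fin n))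
    (c : Fin n → ℝ) (i : Fin n) :
    proj A (∑ j ∈ s, c j • stdBasis n j) i = ∑ j ∈ s, c j * proj A (stdBasis n j) i := by
  simp [proj_eq_starProjection, map_sum, map_smul, WithLp.ofLp_sum, Finset.sum_apply]

theorem wgt_ne_zero {m n : ℕ} (A : EuclideanSpace ℝ (Fin n) →ₗ[ℝ] EuclideanSpace ℝ (Fin m))
    {i : Fin n} (hi : stdBasis n i ∉ LinearMap.ker A) : wgt A i ≠ 0 := by
  rw [wgt, proj_eq_starProjection, Submodule.starProjection_apply, norm_ne_zero_iff,
    Ne, Submodule.coe_eq_zero, Submodule.orthogonalProjectionOnto_eq_zero_iff,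
    Submodule.orthogonal_orthogonal]
  exact hi

theorem proj_sub_apply_of_certificate {m n : ℕ}
    (A : EuclideanSpace ℝ (Fin n) →ₗ[ℝ] EuclideanSpace ℝ (Fin m))
    (xstar : EuclideanSpace ℝ (Fin n)) (a v : Fin n → ℝ)
    (hv : ∀ i, v i = ∑ j ∈ Finset.univ.filter (fun j => xstar j ≠ 0),
      a j * ((wgt A i)⁻¹ * proj A (stdBasis n j) i))
    (α : ℝ) (ystar : EuclideanSpace ℝ (Fin n))
    (hy : ystar = ∑ j ∈ Finset.univ.filter (fun j => xstar j ≠ 0),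
      (xstar j - α * a j) • stdBasis n j) (i : Fin n) (hi : stdBasis n i ∉ LinearMap.ker A) :
    proj A (ystar - xstar) i = -α * (wgt A i * v i) := by
  set J := Finset.univ.filter (fun j => xstar j ≠ 0)
  have hdiff : ystar - xstar = ∑ j ∈ J, (-(α * a j)) • stdBasis n j := calc
    ystar - xstar
        = ∑ j ∈ J, (xstar j - α * a j) • stdBasis n j - ∑ j ∈ J, xstar j • stdBasis n j := by
          rw [hy, sum_support_smul_stdBasis]
    _ = _ := by simp only [← Finset.sum_sub_distrib, ← sub_smul, sub_sub_cancel_left]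
  rw [hdiff, proj_sum_smul_stdBasis_apply, hv, Finset.mul_sum, Finset.mul_sum]
  refine Finset.sum_congr rfl fun j _ => ?_
  field_simp [wgt_ne_zero A hi]

theorem stmt7 {m n : ℕ}
    (A : EuclideanSpace ℝ (Fin n) →ₗ[ℝ] EuclideanSpace ℝ (Fin m))
    (hA : ∀ i, stdBasis n i ∉ LinearMap.ker A)
    (xstar : EuclideanSpace ℝ (Fin n)) (a : Fin n → ℝ) (v : Fin n → ℝ)
    (hv : ∀ i, v i = ∑ j ∈ Finset.univ.filter (fun j => xstar j ≠ 0),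
      a j * ((wgt A i)⁻¹ * proj A (stdBasis n j) i))
    (hC1 : ∀ i, xstar i ≠ 0 → v i = Real.sign (xstar i))
    (hC2 : ∀ i, xstar i = 0 → v i ∈ Set.Ioo (-1 : ℝ) 1)
    (α : ℝ) (hα : 0 < α)
    (hsgn : ∀ j, xstar j ≠ 0 → Real.sign (xstar j - α * a j) = Real.sign (xstar j))
    (ystar : EuclideanSpace ℝ (Fin n))
    (hy : ystar = ∑ j ∈ Finset.univ.filter (fun j => xstar j ≠ 0),
      (xstar j - α * a j) • stdBasis n j)
 :
    ∀ x : EuclideanSpace ℝ (Fin n),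
      (1 / 2) * ‖proj A ystar - proj A xstar‖ ^ 2 + α * wl1 A ystar ≤ (1 / 2) * ‖proj A x - proj A xstar‖ ^ 2 + α * wl1 A x := by
  have hyi (i : Fin n) : ystar i = if xstar i ≠ 0 then xstar i - α * a i else 0 := by
    simp [hy, sum_smul_stdBasis_apply]
  have hv1 (i : Fin n) : |v i| ≤ 1 := by
    by_cases hi : xstar i = 0
    · exact abs_le.mpr ⟨(hC2 i hi).1.le, (hC2 i hi).2.le⟩
    · exact hC1 i hi ▸ Real.abs_sign_le_one _
  have hvy (i : Fin n) : v i * ystar i = |ystar i| := by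
    by_cases hi : xstar i = 0
    · simp [hyi, hi]
    · rw [hC1 i hi, ← hsgn i hi, hyi, if_pos hi, Real.sign_mul_self_eq_abs]
  intro x
  refine Submodule.half_norm_sq_starProjection_sub_add_le _ (fun z => α * wl1 A z) xstar ystar
    (fun z => ?_) x
  calc -⟪proj A (ystar - xstar), z - ystar⟫
      = α * ∑ i, wgt A i * v i * (z i - ystar i) := by
        simp only [PiLp.inner_apply, RCLike.inner_apply, conj_trivial,
          fun i => proj_sub_apply_of_certificate A xstar a v hv α ystar hy i (hA i), Finset.mul_sum,
          ← Finset.sum_neg_distrib]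
        refine Finset.sum_congr rfl fun i _ => ?_
        simp only [PiLp.sub_apply]; ring
    _ ≤ α * (wl1 A z - wl1 A ystar) :=
        mul_le_mul_of_nonneg_left (Finset.sum_mul_mul_sub_le_of_subgradient _
          (fun i _ => norm_nonneg _) (fun i _ => hv1 i) (fun i _ => hvy i) _) hα.le
    _ = α * wl1 A z - α * wl1 A ystar := mul_sub _ _ _
end
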